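/- arXiv:1608.07014 — 3 statements merged into one kernel-verified Lean document; each statement's English description precedes it below -/
import Mathlib

section
/- Let G ⊆ A ⊆ [J] be finite sets, with s₁ = |A \ G|, and let I : [J] → ℝ be any function. For a subset B, let D(B; 1, n) denote the sum of the n smallest values of I over B (with the convention that this sum is +∞ if n > |B|, working in the extended reals). Then for every positive integer n, D(G; 1, n) ≤ D(A; 1 + s₁, n + s₁), where D(A; ℓ, u) denotes the sum of the ℓ-th through u-th smallest values of I over A (again +∞ if u > |A|). -/
open Finset

/-- The `i`-th smallest value (1-indexed) of `I` over the finite set `B`, as an extended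
real, with the convention that it is `⊤` when `i` exceeds `|B|`. -/
noncomputable def ordStat {J : ℕ} (I : Fin J → ℝ) (B : Finset (Fin J)) (i : ℕ) : EReal :=
  (((B.val.map I).sort (· ≤ ·))[i - 1]?).elim ⊤ (fun x => (x : EReal))

/-- `D(B; ℓ, u)`: the sum of the `ℓ`-th through `u`-th smallest values of `I` over `B`,
in the extended reals. -/
noncomputable def Dsum {J : ℕ} (I : Fin J → ℝ) (B : Finset (Fin J)) (ℓ u : ℕ) : EReal :=
  ∑ i ∈ Finset.Icc ℓ u, ordStat I B i

/-! Removing `s` values from a sorted list moves each surviving value down by at most `s`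
places; so the `i`-th smallest value over `G` is at most the `(i + |A \ G|)`-th smallest
over `A`, and summing over `i ∈ [1, n]` gives the theorem. -/

theorem List.Sublist.getElem_le_getElem_of_pairwise {α : Type*} [Preorder α] {l₁ l₂ : List α}
    (h : l₁.Sublist l₂) (h₂ : l₂.Pairwise (· ≤ ·)) {k j : ℕ} (hk : k < l₁.length)
    (hj : j < l₂.length) (hkj : k + l₂.length ≤ j + l₁.length) : l₁[k] ≤ l₂[j] := by
  induction h generalizing k j with
  | slnil => simp at hk
  | @cons l₁ l₂ a h ih =>
    have := h.length_le
    simp only [List.length_cons] at hj hkj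
    obtain ⟨j, rfl⟩ : ∃ j', j = j' + 1 := ⟨j - 1, by omega⟩
    exact ih h₂.of_cons hk (by omega) (by omega)
  | @cons_cons l₁ l₂ a h ih =>
    have := h.length_le
    simp only [List.length_cons] at hk hj hkj
    rcases k with _ | k
    · exact h₂.rel_get_of_le (a := ⟨0, by simp⟩) (b := ⟨j, by simpa using hj⟩) (Nat.zero_le _)
    · obtain ⟨j, rfl⟩ : ∃ j', j = j' + 1 := ⟨j - 1, by omega⟩
      exact ih h₂.of_cons (by omega) (by omega) (by omega)

theorem Multiset.sort_sublist_sort_of_le {α : Type*} (r : α → α → Prop) [DecidableRel r]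
    [IsTrans α r] [Std.Antisymm r] [Std.Total r] {s t : Multiset α} (hst : s ≤ t) :
    (s.sort r).Sublist (t.sort r) := by
  refine List.sublist_of_subperm_of_pairwise ?_ (pairwise_sort s r) (pairwise_sort t r)
  rwa [← Multiset.coe_le, sort_eq, sort_eq]

theorem ordStat_le_ordStat_add_card_sdiff {J : ℕ} (I : Fin J → ℝ) {G A : Finset (Fin J)}
    (hGA : G ⊆ A) {i : ℕ} (hi : 1 ≤ i) :
    ordStat I G i ≤ ordStat I A (i + #(A \ G)) := by
  rw [ordStat, ordStat]
  set lG := (G.val.map I).sort (· ≤ ·)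
  set lA := (A.val.map I).sort (· ≤ ·)
  have hlenG : lG.length = #G := by simp [lG]
  have hlenA : lA.length = #G + #(A \ G) := by
    simp [lA, card_sdiff_of_subset hGA, card_le_card hGA]
  have hsub : lG.Sublist lA :=
    Multiset.sort_sublist_sort_of_le _ (Multiset.map_le_map (val_le_iff.2 hGA))
  by_cases hiG : i - 1 < lG.length
  · have hiA : i + #(A \ G) - 1 < lA.length := by omega
    rw [List.getElem?_eq_getElem hiG, List.getElem?_eq_getElem hiA]
    exact EReal.coe_le_coe_iff.2 <|
      hsub.getElem_le_getElem_of_pairwise (Multiset.pairwise_sort _ _) hiG hiA (by omega)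
  · rw [List.getElem?_eq_none (by omega), List.getElem?_eq_none (by omega)]

theorem Dsum_subset_le_general (J : ℕ) (I : Fin J → ℝ) (G A : Finset (Fin J)) (hGA : G ⊆ A)
    (s₁ : ℕ) (hs₁ : s₁ = (A \ G).card) (n : ℕ) :
    Dsum I G 1 n ≤ Dsum I A (1 + s₁) (n + s₁) := by
  subst hs₁
  rw [Dsum, Dsum, ← map_add_right_Icc, sum_map]
  exact sum_le_sum fun i hi => ordStat_le_ordStat_add_card_sdiff I hGA (mem_Icc.1 hi).1

/-- If `G ⊆ A` with `s₁ = |A \ G|`, then for every `n ≥ 1`,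
`D(G; 1, n) ≤ D(A; 1 + s₁, n + s₁)`. -/
theorem Dsum_subset_le (J : ℕ) (I : Fin J → ℝ) (G A : Finset (Fin J)) (hGA : G ⊆ A)
    (s₁ : ℕ) (hs₁ : s₁ = (A \ G).card) (n : ℕ) (hn : 1 ≤ n) :
    Dsum I G 1 n ≤ Dsum I A (1 + s₁) (n + s₁) :=
  Dsum_subset_le_general J I G A hGA s₁ hs₁ n
end

section
/- For every finite subset A of [J], every function I : [J] → ℝ≥0, and every k with 1 ≤ k ≤ J, the sum of the k smallest values of the combined family {I₁(j) : j ∈ A} ∪ {I₀(j) : j ∉ A} equals the minimum over all subsets C ⊆ [J] with |A △ C| ≥ k of the quantity Σ_{i ∈ A\C} I₁(i) + Σ_{j ∈ C\A} I₀(j). -/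
/-! With `f = A.piecewise I₁ I₀`, the cost of `C` is `∑ i ∈ A ∆ C, f i`, and `C ↦ A ∆ C` is an
involution of `Finset (Fin J)`; the combined family is the multiset of values of `f`. So the claim is
that the `k` smallest values of `f` have the least sum among the sums of `f` over at least `k`
indices. A sublist of a sorted list dominates its initial segment of the same length, and the
values are nonnegative, so dropping indices beyond `k` only helps. -/

open Finset
open scoped NNReal

theorem List.sum_take_cons_le_sum_take {α : Type*} [AddCommMonoid α] [PartialOrder α]
    [IsOrderedAddMonoid α] {a : α} {l : List α} (hl : (a :: l).Pairwise (· ≤ ·)) {n : ℕ}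
    (hn : n ≤ l.length) : ((a :: l).take n).sum ≤ (l.take n).sum := by
  cases n with
  | zero => simp
  | succ m =>
    have hm : m < l.length := hn
    have ha : a ≤ l[m] := List.rel_of_pairwise_cons hl (List.getElem_mem hm)
    calc ((a :: l).take (m + 1)).sum = a + (l.take m).sum := by simp
      _ ≤ l[m] + (l.take m).sum := add_le_add_left ha _
      _ = (l.take (m + 1)).sum := by rw [List.sum_take_succ _ _ hm, add_comm]

theorem List.sum_take_length_le_sum_of_sublist {α : Type*} [AddCommMonoid α] [PartialOrder α]
    [IsOrderedAddMonoid α] {l l' : List α} (hl : l.Pairwise (· ≤ ·)) (h : l'.Sublist l) :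
    (l.take l'.length).sum ≤ l'.sum := by
  induction h with
  | slnil => simp
  | cons a h ih =>
    exact (List.sum_take_cons_le_sum_take hl h.length_le).trans (ih hl.of_cons)
  | cons_cons a h ih =>
    simpa using add_le_add_right (ih hl.of_cons) a

theorem Multiset.sum_take_sort_le_sum {α : Type*} [AddCommMonoid α] [LinearOrder α]
    [IsOrderedAddMonoid α] [CanonicallyOrderedAdd α] {s t : Multiset α} (hts : t ≤ s) {k : ℕ}
    (hk : k ≤ card t) : ((s.sort (· ≤ ·)).take k).sum ≤ t.sum := by
  obtain ⟨l, hlt, hls⟩ : t.toList.Subperm (s.sort (· ≤ ·)) := by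
    rw [← Multiset.coe_le, Multiset.coe_toList, Multiset.sort_eq]
    exact hts
  have hlen : (l.take k).length = k := by simpa [hlt.length_eq] using hk
  calc ((s.sort (· ≤ ·)).take k).sum ≤ (l.take k).sum := by
        simpa [hlen] using List.sum_take_length_le_sum_of_sublist (Multiset.pairwise_sort _ _)
          ((List.take_sublist k l).trans hls)
    _ ≤ l.sum := (List.take_sublist k l).sum_le_sum fun _ _ => _root_.zero_le
    _ = t.sum := by rw [hlt.sum_eq, Multiset.sum_toList]

theorem Multiset.exists_le_map_eq_of_le_map {α β : Type*} {f : α → β} {s : Multiset α}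
    {t : Multiset β} (h : t ≤ s.map f) : ∃ u ≤ s, u.map f = t := by
  induction s using Quotient.inductionOn
  induction t using Quotient.inductionOn
  obtain ⟨l, hl, hsub⟩ := Multiset.coe_le.mp h
  obtain ⟨l', hl's, rfl⟩ := List.sublist_map_iff.mp hsub
  exact ⟨l', Multiset.coe_le.mpr hl's.subperm, Multiset.coe_eq_coe.mpr hl⟩

theorem isLeast_sum_take_sort {ι α : Type*} [Fintype ι] [AddCommMonoid α] [LinearOrder α]
    [IsOrderedAddMonoid α] [CanonicallyOrderedAdd α] (f : ι → α) {k : ℕ}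
    (hk : k ≤ Fintype.card ι) :
    IsLeast {x | ∃ S : Finset ι, k ≤ #S ∧ x = ∑ i ∈ S, f i}
      ((((univ : Finset ι).val.map f).sort (· ≤ ·)).take k).sum := by
  set M := (univ : Finset ι).val.map f
  constructor
  · have hT : (((M.sort (· ≤ ·)).take k : List α) : Multiset α) ≤ M := by
      conv_rhs => rw [← Multiset.sort_eq M (· ≤ ·)]
      exact Multiset.coe_le.mpr <| (List.take_sublist k _).subperm
    obtain ⟨u, hu, hfu⟩ := Multiset.exists_le_map_eq_of_le_map hT
    refine ⟨⟨u, Multiset.nodup_of_le hu univ.nodup⟩, ?_, ?_⟩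
    · have hcard := congrArg Multiset.card hfu
      rw [Multiset.card_map, Multiset.coe_card, List.length_take, Multiset.length_sort,
        Multiset.card_map, card_val, card_univ, min_eq_left hk] at hcard
      exact hcard.ge
    · change _ = (u.map f).sum
      rw [hfu, Multiset.sum_coe]
  · rintro x ⟨S, hS, rfl⟩
    exact Multiset.sum_take_sort_le_sum (Multiset.map_le_map (val_le_iff.mpr (subset_univ S)))
      (by simpa using hS)

theorem Finset.sum_sdiff_add_sum_sdiff_eq_sum_symmDiff {ι β : Type*} [DecidableEq ι]
    [AddCommMonoid β] (s t : Finset ι) (f g : ι → β) :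
    ∑ i ∈ s \ t, f i + ∑ i ∈ t \ s, g i = ∑ i ∈ symmDiff s t, s.piecewise f g i := by
  rw [Finset.symmDiff_def, sum_union disjoint_sdiff_sdiff]
  congr 1 <;> refine sum_congr rfl fun i hi => ?_
  · exact (piecewise_eq_of_mem _ _ _ (mem_sdiff.mp hi).1).symm
  · exact (piecewise_eq_of_notMem _ _ _ (mem_sdiff.mp hi).2).symm

theorem Finset.map_val_add_map_val_compl {ι β : Type*} [Fintype ι] [DecidableEq ι]
    (s : Finset ι) (f g : ι → β) :
    s.val.map f + sᶜ.val.map g = (univ : Finset ι).val.map (s.piecewise f g) := by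
  rw [← s.union_compl, ← disjUnion_eq_union _ _ disjoint_compl_right, disjUnion_val,
    Multiset.map_add]
  congr 1 <;> refine Multiset.map_congr rfl fun i hi => ?_
  · exact (piecewise_eq_of_mem _ _ _ hi).symm
  · exact (piecewise_eq_of_notMem _ _ _ (mem_compl.mp hi)).symm

theorem sum_k_smallest_isLeast_general (J k : ℕ) (hk₂ : k ≤ J)
    (I₁ I₀ : Fin J → ℝ≥0) (A : Finset (Fin J)) :
    IsLeast
      {x : ℝ≥0 | ∃ C : Finset (Fin J), k ≤ (symmDiff A C).card ∧
        x = ∑ i ∈ A \ C, I₁ i + ∑ j ∈ C \ A, I₀ j}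
      ((((A.val.map I₁ + Aᶜ.val.map I₀).sort (· ≤ ·)).take k).sum) := by
  have hset : {x : ℝ≥0 | ∃ C : Finset (Fin J), k ≤ (symmDiff A C).card ∧
        x = ∑ i ∈ A \ C, I₁ i + ∑ j ∈ C \ A, I₀ j} =
      {x | ∃ S : Finset (Fin J), k ≤ #S ∧ x = ∑ i ∈ S, A.piecewise I₁ I₀ i} := by
    ext x
    simp only [Set.mem_ofPred_eq, sum_sdiff_add_sum_sdiff_eq_sum_symmDiff]
    constructor
    · rintro ⟨C, hC, rfl⟩
      exact ⟨_, hC, rfl⟩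
    · rintro ⟨S, hS, rfl⟩
      exact ⟨symmDiff A S, by rwa [symmDiff_symmDiff_cancel_left], by
        rw [symmDiff_symmDiff_cancel_left]⟩
  rw [hset, map_val_add_map_val_compl]
  exact isLeast_sum_take_sort _ (by simpa using hk₂)

/-- The sum of the `k` smallest values of the combined family
`{I₁(j) : j ∈ A} ∪ {I₀(j) : j ∉ A}` is the least value of
`∑_{i ∈ A\C} I₁(i) + ∑_{j ∈ C\A} I₀(j)` over subsets `C ⊆ [J]` with `|A ∆ C| ≥ k`. -/
theorem sum_k_smallest_isLeast (J k : ℕ) (hk₁ : 1 ≤ k) (hk₂ : k ≤ J)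
    (I₁ I₀ : Fin J → ℝ≥0) (A : Finset (Fin J)) :
    IsLeast
      {x : ℝ≥0 | ∃ C : Finset (Fin J), k ≤ (symmDiff A C).card ∧
        x = ∑ i ∈ A \ C, I₁ i + ∑ j ∈ C \ A, I₀ j}
      ((((A.val.map I₁ + Aᶜ.val.map I₀).sort (· ≤ ·)).take k).sum) :=
  sum_k_smallest_isLeast_general J k hk₂ I₁ I₀ A
end

section
/- Let L ≥ 2 and let {ξ_ℓ(n)}_{n ∈ ℕ}, ℓ = 1,…,L, be stochastic processes such that for each ℓ and every ε > 0, Σ_{n=1}^∞ P( |ξ_ℓ(n)/n − μ_ℓ| ≥ ε ) < ∞, with μ_ℓ > 0. Define ν(b₁,…,b_L) = inf{ n ≥ 1 : ξ_ℓ(n) ≥ b_ℓ for all ℓ }. Then E[ν(b₁,…,b_L)] ≤ max_ℓ (b_ℓ/μ_ℓ) · (1 + o(1)) as min_ℓ b_ℓ → ∞; i.e., limsup of E[ν(b)] / max_ℓ(b_ℓ/μ_ℓ) is at most 1. -/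
/-!
Bound `E ν` by `∑ₙ P(ν > n)`. Up to `K ≈ (1 + η) max_ℓ b_ℓ/μ_ℓ` each term is at most `1`; beyond
`K`, the event `ν > n` forces some `ξ_ℓ(n)/n` to deviate from `μ_ℓ` by a fixed proportion, so the
tail is bounded by the finite complete-convergence sums `C`, independently of `b`. Hence
`E ν ≤ (1 + η) max_ℓ b_ℓ/μ_ℓ + 1 + C`, and the additive `1 + C` is absorbed once `min_ℓ b_ℓ` is large.
-/

open MeasureTheory
open scoped ENNReal

/-- First simultaneous crossing time: the least `n ≥ 1` such that `ξ ℓ n ω ≥ b ℓ` for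
every `ℓ`, as an extended nonnegative real (`∞` if no such `n` exists). -/
noncomputable def simCrossing {Ω : Type*} {L : ℕ} (ξ : Fin L → ℕ → Ω → ℝ)
    (b : Fin L → ℝ) (ω : Ω) : ℝ≥0∞ :=
  ⨅ n ∈ {n : ℕ | 1 ≤ n ∧ ∀ ℓ, b ℓ ≤ ξ ℓ n ω}, (n : ℝ≥0∞)

open Set

lemma ENNReal.le_tsum_ite_natCast_lt (x : ℝ≥0∞) :
    x ≤ ∑' n : ℕ, if (n : ℝ≥0∞) < x then 1 else 0 := by
  induction x with
  | top => simp
  | coe r =>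
    calc (r : ℝ≥0∞) ≤ (⌈r⌉₊ : ℝ≥0∞) := by exact_mod_cast Nat.le_ceil r
      _ = ∑ n ∈ Finset.range ⌈r⌉₊, if (n : ℝ≥0∞) < r then 1 else 0 := by
        rw [Finset.sum_congr rfl fun n hn => if_pos ?_]
        · simp
        · exact_mod_cast Nat.lt_ceil.1 (Finset.mem_range.1 hn)
      _ ≤ _ := ENNReal.sum_le_tsum _

/-- No measurability is assumed: `∫⁻` is the lower integral. -/
theorem lintegral_le_tsum_measure_natCast_lt {α : Type*} [MeasurableSpace α] (μ : Measure α)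
    (f : α → ℝ≥0∞) : ∫⁻ a, f a ∂μ ≤ ∑' n : ℕ, μ {a | (n : ℝ≥0∞) < f a} := by
  rw [← iSup_lintegral_measurable_le_eq_lintegral]
  refine iSup₂_le fun g hg => iSup_le fun hgf => ?_
  have hmeas (n : ℕ) : MeasurableSet {a | (n : ℝ≥0∞) < g a} := hg measurableSet_Ioi
  calc ∫⁻ a, g a ∂μ ≤ ∫⁻ a, ∑' n : ℕ, {a | (n : ℝ≥0∞) < g a}.indicator 1 a ∂μ :=
        lintegral_mono fun a => by
          simpa only [indicator_apply, mem_ofPred_eq, Pi.one_apply]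
            using ENNReal.le_tsum_ite_natCast_lt (g a)
    _ = ∑' n : ℕ, μ {a | (n : ℝ≥0∞) < g a} := by
        rw [lintegral_tsum fun n => (measurable_one.indicator (hmeas n)).aemeasurable]
        simp only [lintegral_indicator_one (hmeas _)]
    _ ≤ _ := ENNReal.tsum_le_tsum fun n => measure_mono fun a ha => ha.trans_le (hgf a)

lemma ENNReal.tsum_le_add_tsum_nat_add {f : ℕ → ℝ≥0∞} (hf : ∀ n, f n ≤ 1) (k : ℕ) :
    ∑' n, f n ≤ k + ∑' n, f (n + k) := by
  rw [← ENNReal.summable.sum_add_tsum_nat_add' (k := k)]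
  gcongr
  exact (Finset.sum_le_sum fun n _ => hf n).trans (by simp)

lemma le_abs_div_sub_of_lt {x b μ δ n : ℝ} (hn : 0 < n) (hx : x < b) (hb : b ≤ n * (μ - δ)) :
    δ ≤ |x / n - μ| := by
  have : x / n ≤ μ - δ := by rw [div_le_iff₀ hn]; linarith
  exact le_abs.2 (Or.inr (by linarith))

section simCrossing

variable {Ω : Type*} {L : ℕ} {ξ : Fin L → ℕ → Ω → ℝ} {b : Fin L → ℝ}

lemma exists_lt_of_natCast_lt_simCrossing {ω : Ω} {n : ℕ} (hn : 1 ≤ n)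
    (h : (n : ℝ≥0∞) < simCrossing ξ b ω) : ∃ ℓ, ξ ℓ n ω < b ℓ := by
  by_contra! hcross
  exact h.not_ge (biInf_le _ ⟨hn, hcross⟩)

lemma setOf_natCast_lt_simCrossing_subset {μ δ : Fin L → ℝ} {n : ℕ} (hn : 1 ≤ n)
    (hb : ∀ ℓ, b ℓ ≤ n * (μ ℓ - δ ℓ)) :
    {ω | (n : ℝ≥0∞) < simCrossing ξ b ω} ⊆ ⋃ ℓ, {ω | δ ℓ ≤ |ξ ℓ n ω / n - μ ℓ|} := by
  intro ω hω
  obtain ⟨ℓ, hℓ⟩ := exists_lt_of_natCast_lt_simCrossing hn hω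
  exact mem_iUnion.2 ⟨ℓ, le_abs_div_sub_of_lt (by exact_mod_cast hn) hℓ (hb ℓ)⟩

theorem lintegral_simCrossing_le [MeasurableSpace Ω] (P : Measure Ω) [IsProbabilityMeasure P]
    (μ δ : Fin L → ℝ) {K : ℕ} (hK : 1 ≤ K) (hb : ∀ n ≥ K, ∀ ℓ, b ℓ ≤ n * (μ ℓ - δ ℓ)) :
    ∫⁻ ω, simCrossing ξ b ω ∂P ≤
      K + ∑ ℓ, ∑' n : ℕ, P {ω | δ ℓ ≤ |ξ ℓ n ω / n - μ ℓ|} := by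
  set dev : Fin L → ℕ → ℝ≥0∞ := fun ℓ n => P {ω | δ ℓ ≤ |ξ ℓ n ω / n - μ ℓ|}
  calc ∫⁻ ω, simCrossing ξ b ω ∂P
      ≤ ∑' n : ℕ, P {ω | (n : ℝ≥0∞) < simCrossing ξ b ω} :=
        lintegral_le_tsum_measure_natCast_lt P _
    _ ≤ K + ∑' n : ℕ, P {ω | ((n + K : ℕ) : ℝ≥0∞) < simCrossing ξ b ω} :=
        ENNReal.tsum_le_add_tsum_nat_add (fun _ => prob_le_one) K
    _ ≤ K + ∑' n : ℕ, ∑ ℓ, dev ℓ (n + K) := by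
        gcongr with n
        exact (measure_mono (setOf_natCast_lt_simCrossing_subset (hK.trans (by omega))
          (hb _ (by omega)))).trans (measure_iUnion_fintype_le _ _)
    _ = K + ∑ ℓ, ∑' n : ℕ, dev ℓ (n + K) := by
        rw [Summable.tsum_finsetSum fun ℓ _ => ENNReal.summable]
    _ ≤ K + ∑ ℓ, ∑' n : ℕ, dev ℓ n := by
        gcongr _ + ?_
        exact Finset.sum_le_sum fun ℓ _ =>
          ENNReal.tsum_comp_le_tsum_of_injective (add_left_injective K) (dev ℓ)

end simCrossing

/-- Under complete convergence `ξ_ℓ(n)/n → μ_ℓ > 0`, the expected first simultaneous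
crossing time satisfies `E[ν(b)] ≤ (1 + o(1)) · max_ℓ b_ℓ/μ_ℓ` as `min_ℓ b_ℓ → ∞`. -/
theorem expected_sim_crossing_upper_bound
    {Ω : Type*} [MeasurableSpace Ω] (P : Measure Ω) [IsProbabilityMeasure P]
    (L : ℕ) (hL : 2 ≤ L) (ξ : Fin L → ℕ → Ω → ℝ) (μ : Fin L → ℝ)
    (hμ : ∀ ℓ, 0 < μ ℓ)
    (hcc : ∀ ℓ, ∀ ε > (0 : ℝ),
      (∑' n : ℕ, P {ω | ε ≤ |ξ ℓ n ω / n - μ ℓ|}) ≠ ⊤) :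
    ∀ ε > (0 : ℝ), ∃ M : ℝ, ∀ b : Fin L → ℝ, (∀ ℓ, M ≤ b ℓ) →
      ∫⁻ ω, simCrossing ξ b ω ∂P ≤
        ENNReal.ofReal ((1 + ε) * ⨆ ℓ : Fin L, b ℓ / μ ℓ) := by
  intro ε hε
  obtain ⟨ℓ₀⟩ : Nonempty (Fin L) := ⟨⟨0, by omega⟩⟩
  obtain ⟨η, hη, rfl⟩ : ∃ η > 0, ε = 2 * η := ⟨ε / 2, by positivity, by ring⟩
  -- chosen so that `μ ℓ - δ ℓ = μ ℓ / (1 + η)`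
  set δ : Fin L → ℝ := fun ℓ => μ ℓ - μ ℓ / (1 + η)
  set C : ℝ≥0∞ := ∑ ℓ, ∑' n : ℕ, P {ω | δ ℓ ≤ |ξ ℓ n ω / n - μ ℓ|}
  have hC : C ≠ ⊤ := ENNReal.sum_ne_top.2 fun ℓ _ =>
    hcc ℓ _ (sub_pos.2 (div_lt_self (hμ ℓ) (by linarith)))
  refine ⟨μ ℓ₀ * ((1 + C.toReal) / η), fun b hb => ?_⟩
  set T := ⨆ ℓ, b ℓ / μ ℓ
  have hbT (ℓ : Fin L) : b ℓ ≤ T * μ ℓ :=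
    (div_le_iff₀ (hμ ℓ)).1 (le_ciSup (f := fun ℓ => b ℓ / μ ℓ) (finite_range _).bddAbove ℓ)
  have hCT : 1 + C.toReal ≤ η * T := by
    have : (1 + C.toReal) / η ≤ T :=
      ((le_div_iff₀' (hμ ℓ₀)).2 (hb ℓ₀)).trans ((div_le_iff₀ (hμ ℓ₀)).2 (hbT ℓ₀))
    rwa [div_le_iff₀' hη] at this
  have hT : 0 < T := by nlinarith [ENNReal.toReal_nonneg (a := C)]
  set K := ⌈(1 + η) * T⌉₊
  have hK : 1 ≤ K := Nat.ceil_pos.2 (by positivity)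
  have hbK : ∀ n ≥ K, ∀ ℓ, b ℓ ≤ n * (μ ℓ - δ ℓ) := by
    intro n hn ℓ
    have hn' : (1 + η) * T ≤ n := Nat.ceil_le.1 hn
    rw [sub_sub_cancel, mul_div_assoc', le_div_iff₀ (by linarith)]
    nlinarith [hbT ℓ, hμ ℓ]
  calc ∫⁻ ω, simCrossing ξ b ω ∂P ≤ K + C := lintegral_simCrossing_le P μ δ hK hbK
    _ = ENNReal.ofReal (K + C.toReal) := by
        rw [ENNReal.ofReal_add (by positivity) ENNReal.toReal_nonneg, ENNReal.ofReal_natCast,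
          ENNReal.ofReal_toReal hC]
    _ ≤ ENNReal.ofReal ((1 + 2 * η) * T) := by
        have := Nat.ceil_lt_add_one (a := (1 + η) * T) (by positivity)
        gcongr
        linarith
end
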